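/- For every positive integer n, h_{2n} < 0. -/

import Mathlib

/-!
Write `g k = h (2 * k)`. Using `t (2m) = t m` and `t (2m+1) = -t m`, two steps of the recursion
give `g (k + 2) = g (k + 1) - t (k + 2) * t (k + 1) * g k`. When `t (k + 2) ≠ t (k + 1)` this is
`g (k + 2) = g (k + 1) + g k`, a sum of negatives. When `t (k + 2) = t (k + 1)` it is
`g (k + 2) = g (k + 1) - g k`, which stays negative provided `g (k + 1) < g k`; and that holds
because the previous step was of the first kind: the Thue–Morse sequence has no three equal
consecutive terms.
-/

def t (n : ℕ) : ℤ := (-1) ^ ((Nat.digits 2 n).sum)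

def h : ℕ → ℤ
  | 0 => 0
  | 1 => 1
  | (n + 2) => t (n + 2) * h (n + 1) + h n

lemma t_two_mul (m : ℕ) : t (2 * m) = t m := by
  rcases Nat.eq_zero_or_pos m with rfl | hm
  · rfl
  · simp [t, Nat.digits_def' (b := 2) (by norm_num) (by omega : 0 < 2 * m)]

lemma t_two_mul_add_one (m : ℕ) : t (2 * m + 1) = -t m := by
  simp [t, show (2 * m + 1) / 2 = m by omega, pow_add]

lemma t_eq_one_or_eq_neg_one (n : ℕ) : t n = 1 ∨ t n = -1 :=
  neg_one_pow_eq_or ℤ _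

lemma t_mul_self (n : ℕ) : t n * t n = 1 := by
  rcases t_eq_one_or_eq_neg_one n with h | h <;> simp [h]

lemma t_ne_zero (n : ℕ) : t n ≠ 0 := by
  rcases t_eq_one_or_eq_neg_one n with h | h <;> simp [h]

lemma t_add_two_ne_of_add_one_eq {n : ℕ} (heq : t (n + 1) = t n) : t (n + 2) ≠ t (n + 1) := by
  rcases Nat.even_or_odd' n with ⟨a, rfl | rfl⟩
  · rw [t_two_mul_add_one, t_two_mul] at heq
    exact absurd (by linarith) (t_ne_zero a)
  · rw [show 2 * a + 1 + 2 = 2 * (a + 1) + 1 by ring, show 2 * a + 1 + 1 = 2 * (a + 1) by ring,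
      t_two_mul_add_one, t_two_mul]
    exact fun h => t_ne_zero (a + 1) (by linarith)

lemma h_two_mul_add_two (k : ℕ) : h (2 * k + 2) = t (k + 1) * h (2 * k + 1) + h (2 * k) := by
  rw [h, show 2 * k + 2 = 2 * (k + 1) by ring, t_two_mul]

lemma h_two_mul_add_three (k : ℕ) : h (2 * k + 3) = -t (k + 1) * h (2 * k) := by
  rw [h, show 2 * k + 1 + 2 = 2 * (k + 1) + 1 by ring, t_two_mul_add_one, h_two_mul_add_two]
  linear_combination (-h (2 * k + 1)) * t_mul_self (k + 1)

lemma h_two_mul_add_four (k : ℕ) :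
    h (2 * k + 4) = h (2 * k + 2) - t (k + 2) * t (k + 1) * h (2 * k) := by
  rw [show 2 * k + 4 = 2 * (k + 1) + 2 by ring, h_two_mul_add_two,
    show 2 * (k + 1) + 1 = 2 * k + 3 by ring, h_two_mul_add_three,
    show 2 * (k + 1) = 2 * k + 2 by ring]
  ring

lemma h_two_mul_add_two_neg_invariant (k : ℕ) :
    h (2 * k + 2) < 0 ∧ h (2 * k + 4) < 0 ∧
      (t (k + 3) = t (k + 2) → h (2 * k + 4) < h (2 * k + 2)) := by
  induction k with
  | zero => norm_num [h, t]
  | succ k ih =>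
    obtain ⟨hA, hB, hBA⟩ := ih
    have hC := h_two_mul_add_four (k + 1)
    simp only [show 2 * (k + 1) = 2 * k + 2 by ring] at hC ⊢
    refine ⟨hB, ?_⟩
    by_cases heq : t (k + 3) = t (k + 2)
    · rw [heq, t_mul_self] at hC
      exact ⟨by linarith [hBA heq], fun h' => absurd h' (t_add_two_ne_of_add_one_eq heq)⟩
    · have hprod : t (k + 3) * t (k + 2) = -1 := by
        rcases t_eq_one_or_eq_neg_one (k + 3) with h3 | h3 <;>
          rcases t_eq_one_or_eq_neg_one (k + 2) with h2 | h2 <;> simp_all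
      rw [hprod] at hC
      exact ⟨by linarith, fun _ => by linarith⟩

theorem stmt2 : ∀ n : ℕ, 0 < n → h (2 * n) < 0 := by
  intro n hn
  obtain ⟨k, rfl⟩ := Nat.exists_eq_add_of_lt hn
  simpa [mul_add] using (h_two_mul_add_two_neg_invariant k).1
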